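/- (MacMahon's formula, q-Simon Newcomb problem.) Let p₁,…,p_m be positive integers with p = p₁+⋯+p_m. In the ring of formal power series in t with coefficients in ℤ[q], the identity (∏_{i=0}^{p} (1 − t q^i)) · ∑_{n≥0} t^n ∏_{j=1}^{m} qbinom(n+p_j, p_j) = ∑_w t^{des(w)} q^{maj(w)} holds, where the sum on the right is over all multiset permutations w of {1^{p₁},…,m^{p_m}}. -/

import Mathlib

open scoped Classical

/-- The descent set of the word `w 1, …, w p` (1-based positions). -/
def desSet (p : ℕ) (f : Fin p → ℕ) : Finset ℕ :=
  (Finset.Ico 1 p).filter fun i =>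
    ∃ (h1 : i - 1 < p) (h2 : i < p), f ⟨i, h2⟩ < f ⟨i - 1, h1⟩

/-- `(q)_n = (1-q)(1-q²)⋯(1-qⁿ)`. -/
noncomputable def qpoch (n : ℕ) : Polynomial ℤ :=
  ∏ i ∈ Finset.Icc 1 n, (1 - Polynomial.X ^ i)

/-!
`qbinom (n + k) k` is the generating function of the partitions with at most `k` parts, each at
most `n` (antitone maps `Fin k → Fin (n + 1)`), so the coefficient of `tⁿ` in the series on the
left is the generating function of families of such partitions, one with `p_j` parts for each
letter `j`. Sorting all their parts `(value, letter)` lexicographically turns such a family into a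
multiset permutation `w` together with a map `G : Fin p → Fin (n + 1)` that decreases weakly, and
strictly across every descent of `w`. Subtracting from `G` the number of descents of `w` to the
right of each position leaves an arbitrary partition with at most `p` parts, each at most
`n - des w`, and removes `maj w` from the size. Hence the coefficient is
`∑_w q^{maj w} qbinom (n - des w + p) p`, while
`∑ₙ qbinom (n + p) p tⁿ = 1 / ∏_{i ≤ p} (1 - t qⁱ)` by the q-Pascal recursion.
-/

open Polynomial Finset

lemma Fin.antitone_cons_top_iff {α : Type*} [Preorder α] [OrderTop α] {k : ℕ}
    (f : Fin k → α) :
    Antitone (Fin.cons ⊤ f : Fin (k + 1) → α) ↔ Antitone f := by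
  refine ⟨fun h => fun a b hab => by simpa using h (Fin.succ_le_succ_iff.2 hab), fun h => ?_⟩
  intro a b hab
  induction b using Fin.cases with
  | zero => simp [Fin.le_zero_iff.1 hab]
  | succ b =>
    induction a using Fin.cases with
    | zero => simp
    | succ a => simpa using h (Fin.succ_le_succ_iff.1 hab)

lemma Fin.antitone_iff_forall_add_one_le {α : Type*} [Preorder α] {p : ℕ} (f : Fin p → α) :
    Antitone f ↔ ∀ k (hk : k + 1 < p), f ⟨k + 1, hk⟩ ≤ f ⟨k, by omega⟩ := by
  cases p with
  | zero => exact ⟨fun _ k hk => absurd hk (by omega), fun _ => Subsingleton.antitone f⟩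
  | succ p =>
    exact Fin.antitone_iff_succ_le.trans
      ⟨fun h k hk => h ⟨k, by omega⟩, fun h i => h i i.succ.isLt⟩

section AntitoneEnumeration

variable {α : Type*} [LinearOrder α] {k : ℕ}

lemma eq_of_antitone_of_map_univ_eq {f g : Fin k → α} (hf : Antitone f) (hg : Antitone g)
    (h : univ.val.map f = univ.val.map g) : f = g := by
  rw [Fin.univ_val_map, Fin.univ_val_map, Multiset.coe_eq_coe] at h
  exact List.ofFn_injective (h.eq_of_sortedGE (List.sortedGE_ofFn_iff.2 hf)
    (List.sortedGE_ofFn_iff.2 hg))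

lemma Multiset.exists_antitone_map_univ_eq (s : Multiset α) (hs : Multiset.card s = k) :
    ∃ f : Fin k → α, Antitone f ∧ univ.val.map f = s := by
  subst hs
  set l := s.sort (· ≥ ·)
  have hl : l.length = Multiset.card s := Multiset.length_sort _
  refine ⟨fun i => l.get (i.cast hl.symm), ?_, ?_⟩
  · have hanti := List.sortedGE_iff_antitone_get.1 (List.sortedGE_iff_pairwise.2
      (Multiset.pairwise_sort s _))
    exact fun a b hab => hanti hab
  · rw [Fin.univ_val_map, ← List.ofFn_congr hl, List.ofFn_get, Multiset.sort_eq]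

end AntitoneEnumeration

lemma Multiset.filter_finset_sum {ι α : Type*} (q : α → Prop) [DecidablePred q] (s : Finset ι)
    (f : ι → Multiset α) : (∑ i ∈ s, f i).filter q = ∑ i ∈ s, (f i).filter q := by
  induction s using Finset.cons_induction with
  | empty => simp
  | cons a s ha ih => rw [Finset.sum_cons, Finset.sum_cons, filter_add, ih]

lemma qpoch_succ (n : ℕ) : qpoch (n + 1) = qpoch n * (1 - X ^ (n + 1)) := by
  rw [qpoch, qpoch, prod_Icc_succ_top (by omega)]

lemma qpoch_ne_zero (n : ℕ) : qpoch n ≠ 0 := by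
  induction n with
  | zero => simp [qpoch]
  | succ n ih =>
    rw [qpoch_succ]
    refine mul_ne_zero ih fun h => ?_
    simpa using congrArg (eval 0) h

/-- The generating function `∑ q^|λ|` of the partitions `λ` with at most `k` parts, each at most
`n`; such a partition is an antitone map `Fin k → Fin (n + 1)`. -/
noncomputable def boxGF (n k : ℕ) : ℤ[X] :=
  ∑ g ∈ univ.filter (Antitone : (Fin k → Fin (n + 1)) → Prop), X ^ ∑ i, (g i : ℕ)

lemma boxGF_zero_right (n : ℕ) : boxGF n 0 = 1 := by
  simp [boxGF, Subsingleton.antitone]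

lemma boxGF_zero_left (k : ℕ) : boxGF 0 k = 1 := by
  simp [boxGF, Subsingleton.antitone']

lemma boxGF_succ_succ (n k : ℕ) :
    boxGF (n + 1) (k + 1) = boxGF n (k + 1) + X ^ (n + 1) * boxGF (n + 1) k := by
  rw [boxGF, ← sum_filter_not_add_sum_filter _ (fun g => g 0 = Fin.last (n + 1))]
  congr 1
  · have ne_last {g : Fin (k + 1) → Fin (n + 2)} (hg : Antitone g)
        (h0 : g 0 ≠ Fin.last (n + 1)) (i : Fin (k + 1)) : g i ≠ Fin.last (n + 1) :=
      (lt_of_le_of_lt (hg (Fin.zero_le i)) (Fin.lt_last_iff_ne_last.2 h0)).ne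
    refine sum_bij'
      (fun g hg i => (g i).castPred (ne_last (mem_filter.1 (mem_filter.1 hg).1).2
        (mem_filter.1 hg).2 i))
      (fun g _ => Fin.castSucc ∘ g)
      ?_ ?_ (fun _ _ => rfl) (fun _ _ => rfl) ?_
    · simp only [mem_filter, mem_univ, true_and]
      exact fun g hg a b hab => Fin.castPred_le_castPred_iff.2 (hg.1 hab)
    · simp only [mem_filter, mem_univ, true_and]
      exact fun g hg => ⟨fun a b hab => Fin.castSucc_le_castSucc_iff.2 (hg hab),
        (Fin.castSucc_lt_last _).ne⟩
    · intro g hg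
      simp
  · rw [boxGF, mul_sum]
    refine sum_bij' (fun g _ => Fin.tail g) (fun g _ => Fin.cons (Fin.last (n + 1)) g)
      ?_ ?_ ?_ (fun _ _ => Fin.tail_cons _ _) ?_
    · simp only [mem_filter, mem_univ, true_and]
      exact fun g hg => hg.1.comp_monotone (Fin.strictMono_succ.monotone)
    · simp only [mem_filter, mem_univ, true_and, Fin.cons_zero, and_true]
      exact fun g hg => (Fin.antitone_cons_top_iff g).2 hg
    · intro g hg
      simp only [mem_filter, mem_univ, true_and] at hg
      rw [← hg.2, Fin.cons_self_tail]
    · intro g hg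
      simp only [mem_filter, mem_univ, true_and] at hg
      rw [Fin.sum_univ_succ, hg.2, Fin.val_last, pow_add]
      rfl

lemma boxGF_mul_qpoch (n k : ℕ) : boxGF n k * (qpoch k * qpoch n) = qpoch (n + k) := by
  induction k generalizing n with
  | zero => simp [boxGF_zero_right, qpoch]
  | succ k ihk =>
    induction n with
    | zero => simp [boxGF_zero_left, qpoch]
    | succ n ihn =>
      have hk := ihk (n + 1)
      rw [show n + 1 + k = n + k + 1 by omega, qpoch_succ n] at hk
      rw [show n + (k + 1) = n + k + 1 by omega, qpoch_succ k] at ihn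
      rw [boxGF_succ_succ, show n + 1 + (k + 1) = n + k + 1 + 1 by omega, qpoch_succ (n + k + 1),
        qpoch_succ k, qpoch_succ n]
      linear_combination (1 - X ^ (n + 1)) * ihn + X ^ (n + 1) * (1 - X ^ (k + 1)) * hk

lemma boxGF_eq_of_mul_qpoch {b : ℤ[X]} {n k : ℕ} (h : b * (qpoch k * qpoch n) = qpoch (n + k)) :
    b = boxGF n k :=
  mul_right_cancel₀ (mul_ne_zero (qpoch_ne_zero k) (qpoch_ne_zero n))
    (h.trans (boxGF_mul_qpoch n k).symm)

lemma boxGF_comm (n k : ℕ) : boxGF n k = boxGF k n :=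
  boxGF_eq_of_mul_qpoch (by rw [mul_comm (qpoch n), add_comm, boxGF_mul_qpoch])

lemma boxGF_succ_succ' (n k : ℕ) :
    boxGF (n + 1) (k + 1) = boxGF (n + 1) k + X ^ (k + 1) * boxGF n (k + 1) := by
  rw [boxGF_comm, boxGF_succ_succ, boxGF_comm k, boxGF_comm (k + 1), add_comm]

lemma mk_boxGF_eq_one_sub_mul (p : ℕ) :
    PowerSeries.mk (fun n => boxGF n p) =
      (1 - PowerSeries.C (X ^ (p + 1)) * PowerSeries.X) *
        PowerSeries.mk (fun n => boxGF n (p + 1)) := by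
  refine PowerSeries.ext fun n => ?_
  rcases n with _ | n <;>
    simp only [sub_mul, one_mul, mul_assoc, map_sub, PowerSeries.coeff_C_mul,
      PowerSeries.coeff_zero_X_mul, PowerSeries.coeff_succ_X_mul, PowerSeries.coeff_mk]
  · simp [boxGF_zero_left]
  · rw [boxGF_succ_succ', add_sub_cancel_right]

lemma prod_one_sub_mul_mk_boxGF (p : ℕ) :
    (∏ i ∈ range (p + 1), (1 - PowerSeries.C (X ^ i) * PowerSeries.X)) *
      PowerSeries.mk (fun n => boxGF n p) = 1 := by
  induction p with
  | zero =>
    rw [prod_range_one, pow_zero, map_one, one_mul, mul_comm]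
    simp only [boxGF_zero_right]
    exact PowerSeries.mk_one_mul_one_sub_eq_one ℤ[X]
  | succ p ih => rw [prod_range_succ, mul_assoc, ← mk_boxGF_eq_one_sub_mul, ih]

section Descents

variable {p : ℕ} (f : Fin p → ℕ)

lemma mem_desSet_add_one {k : ℕ} (hk : k + 1 < p) :
    k + 1 ∈ desSet p f ↔ f ⟨k + 1, hk⟩ < f ⟨k, by omega⟩ := by
  simp [desSet, hk, show k < p by omega]

lemma lt_of_mem_desSet {i : ℕ} (hi : i ∈ desSet p f) : 1 ≤ i ∧ i < p :=
  mem_Ico.1 (mem_filter.1 hi).1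

def descentsAfter (k : ℕ) : ℕ := #{i ∈ desSet p f | k < i}

lemma descentsAfter_eq_add (k : ℕ) :
    descentsAfter f k = descentsAfter f (k + 1) + if k + 1 ∈ desSet p f then 1 else 0 := by
  rw [descentsAfter, descentsAfter, card_filter, card_filter,
    ← sum_ite_eq' (desSet p f) (k + 1) (fun _ => 1), ← sum_add_distrib]
  refine sum_congr rfl fun i _ => ?_
  split_ifs <;> omega

lemma descentsAfter_zero : descentsAfter f 0 = #(desSet p f) := by
  rw [descentsAfter, filter_true_of_mem fun i (hi : i ∈ desSet p f) =>
    show 0 < i from (lt_of_mem_desSet f hi).1]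

lemma descentsAfter_eq_zero {k : ℕ} (hk : p ≤ k + 1) : descentsAfter f k = 0 := by
  rw [descentsAfter, card_eq_zero, filter_eq_empty_iff]
  intro i hi
  have := lt_of_mem_desSet f hi
  omega

lemma descentsAfter_le (k : ℕ) : descentsAfter f k ≤ #(desSet p f) :=
  card_filter_le _ _

lemma sum_descentsAfter : ∑ i : Fin p, descentsAfter f i = (desSet p f).sum id := by
  simp only [descentsAfter, card_filter]
  rw [Fin.sum_univ_eq_sum_range (fun k => ∑ i ∈ desSet p f, if k < i then 1 else 0), sum_comm]
  refine sum_congr rfl fun i hi => ?_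
  rw [← card_filter, show {k ∈ range p | k < i} = range i by
    ext k; simp only [mem_filter, mem_range]; have := lt_of_mem_desSet f hi; omega]
  exact card_range i

end Descents

section Compatible

variable {p m n : ℕ}

/-- `G` decreases weakly, and strictly across every descent of `w`. -/
def IsCompatible (w : Fin p → Fin m) (G : Fin p → Fin (n + 1)) : Prop :=
  Antitone fun i => toLex (G i, OrderDual.toDual (w i))

variable {w : Fin p → Fin m} {G : Fin p → Fin (n + 1)}

lemma isCompatible_iff_antitone_sub :
    IsCompatible w G ↔
      Antitone fun i => (G i : ℤ) - descentsAfter (fun k => (w k : ℕ)) i := by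
  rw [IsCompatible, Fin.antitone_iff_forall_add_one_le, Fin.antitone_iff_forall_add_one_le]
  refine forall₂_congr fun k hk => ?_
  have hdes := mem_desSet_add_one (fun k => (w k : ℕ)) hk
  simp only [Prod.Lex.toLex_le_toLex, OrderDual.toDual_le_toDual, descentsAfter_eq_add _ k]
  split_ifs with h <;> rw [hdes] at h <;> simp only [Fin.lt_def, Fin.le_def, Fin.ext_iff] at h ⊢
  all_goals constructor <;> intro h' <;> omega

lemma IsCompatible.descentsAfter_le (h : IsCompatible w G) (i : Fin p) :
    descentsAfter (fun k => (w k : ℕ)) i ≤ G i := by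
  have hi := isCompatible_iff_antitone_sub.1 h
    (show i ≤ ⟨p - 1, by have := i.isLt; omega⟩ from
      Fin.le_def.2 (Nat.le_sub_one_of_lt i.isLt))
  simp only [descentsAfter_eq_zero _ (by omega : p ≤ p - 1 + 1)] at hi
  omega

lemma IsCompatible.card_desSet_le (h : IsCompatible w G) :
    #(desSet p fun k => (w k : ℕ)) ≤ n := by
  obtain h0 | h0 := Nat.eq_zero_or_pos #(desSet p fun k => (w k : ℕ))
  · omega
  obtain ⟨i, hi⟩ := card_pos.1 h0
  have hp : 0 < p := by have := lt_of_mem_desSet _ hi; omega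
  have := h.descentsAfter_le ⟨0, hp⟩
  rw [descentsAfter_zero] at this
  exact this.trans (G ⟨0, hp⟩).is_le

lemma IsCompatible.sub_descentsAfter_le (h : IsCompatible w G) (i : Fin p) :
    G i - descentsAfter (fun k => (w k : ℕ)) i ≤ n - #(desSet p fun k => (w k : ℕ)) := by
  have hi := isCompatible_iff_antitone_sub.1 h
    (show ⟨0, i.pos⟩ ≤ i from Fin.le_def.2 (Nat.zero_le _))
  have h0 := h.descentsAfter_le i
  have hG := (G ⟨0, i.pos⟩).is_le
  simp only [descentsAfter_zero] at hi
  omega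

lemma IsCompatible.antitone (h : IsCompatible w G) : Antitone G :=
  Prod.Lex.monotone_fst_ofLex.comp_antitone h

end Compatible

noncomputable def compatibleGF {p m : ℕ} (w : Fin p → Fin m) (n : ℕ) : ℤ[X] :=
  ∑ G ∈ univ.filter (IsCompatible w : (Fin p → Fin (n + 1)) → Prop), X ^ ∑ i, (G i : ℕ)

lemma compatibleGF_of_le {p m : ℕ} (w : Fin p → Fin m) {n : ℕ}
    (hd : #(desSet p fun k => (w k : ℕ)) ≤ n) :
    compatibleGF w n = X ^ (desSet p fun k => (w k : ℕ)).sum id *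
      boxGF (n - #(desSet p fun k => (w k : ℕ))) p := by
  rw [compatibleGF, boxGF, mul_sum]
  symm
  refine sum_bij'
    (fun μ _ i => ⟨μ i + descentsAfter (fun k => (w k : ℕ)) i, by
      have := (μ i).is_le; have := descentsAfter_le (fun k => (w k : ℕ)) i; omega⟩)
    (fun G hG i => ⟨G i - descentsAfter (fun k => (w k : ℕ)) i,
      Nat.lt_succ_of_le ((mem_filter.1 hG).2.sub_descentsAfter_le i)⟩)
    ?_ ?_ ?_ ?_ ?_
  · simp only [mem_filter, mem_univ, true_and, isCompatible_iff_antitone_sub]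
    intro μ hμ a b hab
    have := Fin.le_def.1 (hμ hab)
    push_cast
    omega
  · simp only [mem_filter, mem_univ, true_and]
    intro G hG a b hab
    have := isCompatible_iff_antitone_sub.1 hG hab
    have := hG.descentsAfter_le a
    have := hG.descentsAfter_le b
    simp only [Fin.le_def] at *
    omega
  · intro μ _
    ext i
    simp
  · intro G hG
    ext i
    have := (mem_filter.1 hG).2.descentsAfter_le i
    simp only
    omega
  · intro μ _
    rw [← pow_add, sum_add_distrib, sum_descentsAfter, add_comm]

lemma compatibleGF_eq {p m : ℕ} (w : Fin p → Fin m) (n : ℕ) :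
    compatibleGF w n =
      if #(desSet p fun k => (w k : ℕ)) ≤ n then
        X ^ (desSet p fun k => (w k : ℕ)).sum id * boxGF (n - #(desSet p fun k => (w k : ℕ))) p
      else 0 := by
  split_ifs with hd
  · exact compatibleGF_of_le w hd
  · exact sum_eq_zero fun G hG => absurd (mem_filter.1 hG).2.card_desSet_le hd

section Merge

variable {m n : ℕ} {par : Fin m → ℕ}

def mergedCells (y : ∀ j, Fin (par j) → Fin (n + 1)) :
    Multiset (Fin (n + 1) ×ₗ (Fin m)ᵒᵈ) :=
  ∑ j, univ.val.map fun k => toLex (y j k, OrderDual.toDual j)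

lemma card_mergedCells (y : ∀ j, Fin (par j) → Fin (n + 1)) :
    Multiset.card (mergedCells y) = ∑ j, par j := by
  simp [mergedCells, Multiset.card_sum]

lemma filter_mergedCells (y : ∀ j, Fin (par j) → Fin (n + 1)) (j : Fin m) :
    (mergedCells y).filter (fun c => OrderDual.ofDual (ofLex c).2 = j) =
      univ.val.map fun k => toLex (y j k, OrderDual.toDual j) := by
  rw [mergedCells, Multiset.filter_finset_sum, sum_eq_single j]
  · exact Multiset.filter_eq_self.2 (by simp)
  · exact fun j' _ hj' => Multiset.filter_eq_nil.2 (by simp [hj'])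
  · simp

lemma eq_of_mergedCells_eq {y y' : ∀ j, Fin (par j) → Fin (n + 1)} (hy : ∀ j, Antitone (y j))
    (hy' : ∀ j, Antitone (y' j)) (h : mergedCells y = mergedCells y') : y = y' :=
  funext fun j => eq_of_antitone_of_map_univ_eq (hy j) (hy' j) <| by
    have := congrArg (fun s => (s.filter fun c => OrderDual.ofDual (ofLex c).2 = j).map
      fun c => (ofLex c).1) h
    simpa [filter_mergedCells, Function.comp_def] using this

variable {p : ℕ} {w : Fin p → Fin m}

def splitByLetter (hw : ∀ j, #{i | w i = j} = par j) (G : Fin p → Fin (n + 1)) :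
    ∀ j, Fin (par j) → Fin (n + 1) :=
  fun j => G ∘ ({i | w i = j} : Finset (Fin p)).orderEmbOfFin (hw j)

lemma map_univ_eq_mergedCells_splitByLetter (hw : ∀ j, #{i | w i = j} = par j)
    (G : Fin p → Fin (n + 1)) :
    univ.val.map (fun i => toLex (G i, OrderDual.toDual (w i))) =
      mergedCells (splitByLetter hw G) := by
  have map_eq_sum (s : Finset (Fin p)) :
      s.val.map (fun i => toLex (G i, OrderDual.toDual (w i))) =
        ∑ i ∈ s, {toLex (G i, OrderDual.toDual (w i))} := by
    rw [sum_eq_multiset_sum, ← Multiset.sum_map_singleton (s.val.map _), Multiset.map_map]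
    rfl
  rw [map_eq_sum, ← sum_fiberwise univ w, mergedCells]
  refine sum_congr rfl fun j _ => ?_
  rw [← map_eq_sum, ← map_orderEmbOfFin_univ _ (hw j), Finset.map_val, Multiset.map_map]
  refine Multiset.map_congr rfl fun k _ => ?_
  simp only [Function.comp_apply, splitByLetter]
  congr
  exact (mem_filter.1 (orderEmbOfFin_mem _ (hw j) k)).2

lemma sum_splitByLetter (hw : ∀ j, #{i | w i = j} = par j) (G : Fin p → Fin (n + 1)) :
    ∑ j, ∑ k, (splitByLetter hw G j k : ℕ) = ∑ i, (G i : ℕ) := by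
  rw [← sum_fiberwise univ w]
  refine sum_congr rfl fun j _ => ?_
  rw [← map_orderEmbOfFin_univ _ (hw j), sum_map]
  rfl

lemma antitone_splitByLetter (hw : ∀ j, #{i | w i = j} = par j) {G : Fin p → Fin (n + 1)}
    (hG : Antitone G) (j : Fin m) : Antitone (splitByLetter hw G j) :=
  hG.comp_monotone (orderEmbOfFin _ _).monotone

lemma eq_of_splitByLetter_eq {w' : Fin p → Fin m} {G G' : Fin p → Fin (n + 1)}
    (hw : ∀ j, #{i | w i = j} = par j) (hw' : ∀ j, #{i | w' i = j} = par j)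
    (h : IsCompatible w G) (h' : IsCompatible w' G')
    (hs : splitByLetter hw G = splitByLetter hw' G') : w = w' ∧ G = G' := by
  have hF : (fun i => toLex (G i, OrderDual.toDual (w i))) =
      fun i => toLex (G' i, OrderDual.toDual (w' i)) :=
    eq_of_antitone_of_map_univ_eq h h' (by
      rw [map_univ_eq_mergedCells_splitByLetter hw, map_univ_eq_mergedCells_splitByLetter hw', hs])
  exact ⟨funext fun i => by simpa using congrArg (fun c => (ofLex c).2) (congrFun hF i),
    funext fun i => congrArg (fun c => (ofLex c).1) (congrFun hF i)⟩

lemma exists_splitByLetter_eq (hp : p = ∑ j, par j) {y : ∀ j, Fin (par j) → Fin (n + 1)}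
    (hy : ∀ j, Antitone (y j)) :
    ∃ (w : Fin p → Fin m) (G : Fin p → Fin (n + 1)) (hw : ∀ j, #{i | w i = j} = par j),
      IsCompatible w G ∧ splitByLetter hw G = y := by
  obtain ⟨F, hF, hFy⟩ :=
    Multiset.exists_antitone_map_univ_eq (mergedCells y) (k := p) (by rw [card_mergedCells, hp])
  have hw (j : Fin m) : #{i | OrderDual.ofDual (ofLex (F i)).2 = j} = par j := by
    have := congrArg Multiset.card (filter_mergedCells y j)
    rwa [← hFy, Multiset.filter_map, Multiset.card_map, Multiset.card_map, card_val, card_univ,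
      Fintype.card_fin] at this
  refine ⟨fun i => OrderDual.ofDual (ofLex (F i)).2, fun i => (ofLex (F i)).1, hw, hF, ?_⟩
  refine eq_of_mergedCells_eq
    (antitone_splitByLetter hw (Prod.Lex.monotone_fst_ofLex.comp_antitone hF)) hy ?_
  rw [← map_univ_eq_mergedCells_splitByLetter]
  exact hFy

end Merge

lemma prod_boxGF_eq_sum_compatibleGF {m : ℕ} (par : Fin m → ℕ) {p : ℕ}
    (hp : p = ∑ j, par j) (n : ℕ) :
    ∏ j, boxGF n (par j) =
      ∑ w ∈ univ.filter (fun w : Fin p → Fin m => ∀ j, #{i | w i = j} = par j),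
        compatibleGF w n := by
  simp only [boxGF, compatibleGF]
  rw [prod_univ_sum, ← sum_finset_product'
    (univ.filter fun x : (Fin p → Fin m) × (Fin p → Fin (n + 1)) =>
      (∀ j, #{i | x.1 i = j} = par j) ∧ IsCompatible x.1 x.2) _ _ (by simp)]
  symm
  refine sum_bij (fun x hx => splitByLetter (mem_filter.1 hx).2.1 x.2) ?_ ?_ ?_ ?_
  · intro x hx
    simpa using antitone_splitByLetter _ (mem_filter.1 hx).2.2.antitone
  · intro x hx x' hx' h
    exact Prod.ext_iff.2
      (eq_of_splitByLetter_eq _ _ (mem_filter.1 hx).2.2 (mem_filter.1 hx').2.2 h)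
  · intro y hy
    obtain ⟨w, G, hw, hG, rfl⟩ := exists_splitByLetter_eq hp (by simpa using hy)
    exact ⟨(w, G), by simp [hw, hG], rfl⟩
  · intro x _
    rw [prod_pow_eq_pow_sum, sum_splitByLetter]

lemma mk_prod_boxGF_eq {m : ℕ} (par : Fin m → ℕ) {p : ℕ} (hp : p = ∑ j, par j) :
    PowerSeries.mk (fun n => ∏ j, boxGF n (par j)) =
      PowerSeries.mk (fun n => boxGF n p) *
        ∑ w ∈ univ.filter (fun w : Fin p → Fin m => ∀ j, #{i | w i = j} = par j),
          PowerSeries.C (X ^ (desSet p fun k => (w k : ℕ)).sum id) *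
            PowerSeries.X ^ #(desSet p fun k => (w k : ℕ)) := by
  refine PowerSeries.ext fun n => ?_
  rw [PowerSeries.coeff_mk, prod_boxGF_eq_sum_compatibleGF par hp, mul_sum, map_sum]
  refine sum_congr rfl fun w _ => ?_
  rw [compatibleGF_eq, mul_left_comm, PowerSeries.coeff_C_mul, PowerSeries.coeff_mul_X_pow',
    PowerSeries.coeff_mk]
  split_ifs <;> simp

theorem macmahon_q_simon_newcomb_general (m : ℕ) (par : Fin m → ℕ)
    (p : ℕ) (hp : p = ∑ j, par j)
    (qbinom : ℕ → ℕ → Polynomial ℤ)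
    (hqb : ∀ a b : ℕ, b ≤ a → qbinom a b * (qpoch b * qpoch (a - b)) = qpoch a) :
    (∏ i ∈ Finset.range (p + 1),
        (1 - (PowerSeries.C : Polynomial ℤ →+* PowerSeries (Polynomial ℤ)) (Polynomial.X ^ i) * PowerSeries.X)) *
      PowerSeries.mk (fun n => ∏ j, qbinom (n + par j) (par j)) =
    ∑ w ∈ Finset.univ.filter (fun w : Fin p → Fin m =>
        ∀ j : Fin m, (Finset.univ.filter fun i : Fin p => w i = j).card = par j),
      (PowerSeries.C : Polynomial ℤ →+* PowerSeries (Polynomial ℤ))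
          (Polynomial.X ^ ((desSet p fun k => ((w k : ℕ))).sum id)) *
        PowerSeries.X ^ (desSet p fun k => ((w k : ℕ))).card := by
  have qbinom_eq_boxGF (n : ℕ) (j : Fin m) : qbinom (n + par j) (par j) = boxGF n (par j) :=
    boxGF_eq_of_mul_qpoch (by simpa using hqb (n + par j) (par j) (by omega))
  simp only [qbinom_eq_boxGF]
  rw [mk_prod_boxGF_eq par hp, ← mul_assoc, prod_one_sub_mul_mk_boxGF, one_mul]

/-- **MacMahon's formula (q-Simon Newcomb problem)** : in `(ℤ[q])[[t]]`,
`(∏_{i=0}^{p} (1 − t q^i)) ⬝ ∑_{n≥0} tⁿ ∏_j binom(n+p_j, p_j)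
  = ∑_w t^{des w} q^{maj w}`,
the sum over multiset permutations `w` of `{1^{p₁},…,m^{p_m}}`, where `binom` is
the Gaussian binomial coefficient, pinned down by its defining identity
`binom(a,b) (q)_b (q)_{a-b} = (q)_a` for `b ≤ a`. -/
theorem macmahon_q_simon_newcomb (m : ℕ) (hm : 0 < m) (par : Fin m → ℕ)
    (hpar : ∀ j, 0 < par j) (p : ℕ) (hp : p = ∑ j, par j)
    (qbinom : ℕ → ℕ → Polynomial ℤ)
    (hqb : ∀ a b : ℕ, b ≤ a → qbinom a b * (qpoch b * qpoch (a - b)) = qpoch a) :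
    (∏ i ∈ Finset.range (p + 1),
        (1 - (PowerSeries.C : Polynomial ℤ →+* PowerSeries (Polynomial ℤ)) (Polynomial.X ^ i) * PowerSeries.X)) *
      PowerSeries.mk (fun n => ∏ j, qbinom (n + par j) (par j)) =
    ∑ w ∈ Finset.univ.filter (fun w : Fin p → Fin m =>
        ∀ j : Fin m, (Finset.univ.filter fun i : Fin p => w i = j).card = par j),
      (PowerSeries.C : Polynomial ℤ →+* PowerSeries (Polynomial ℤ))
          (Polynomial.X ^ ((desSet p fun k => ((w k : ℕ))).sum id)) *
        PowerSeries.X ^ (desSet p fun k => ((w k : ℕ))).card :=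
  macmahon_q_simon_newcomb_general m par p hp qbinom hqb
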